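/- arXiv:1310.2713 — 4 statements merged into one kernel-verified Lean document; each statement's English description precedes it below -/
import Mathlib

section
/- In Cl(2), for all α, β ∈ ℝ, the rejection of the point ι(a(α)) by the point ι(a(β)), namely (1/2) • (ι(a(α)) * ι(a(β)) − ι(a(β)) * ι(a(α))) * ι(a(β)), equals sin (α − β) • (ι(a(β)) * e₀ * e₁); that is, the rejection coincides with the polar point of a(β) weighted by sin(α − β). -/
/-- The standard positive-definite quadratic form `Q(x) = x₀² + x₁²` on `ℝ²`. -/
noncomputable def Qe2 : QuadraticForm ℝ (Fin 2 → ℝ) :=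
  QuadraticMap.weightedSumSquares ℝ (fun _ : Fin 2 => (1 : ℝ))

/-- The canonical embedding of `ℝ²` into the Clifford algebra `Cl(2)`. -/
noncomputable def ι2 : (Fin 2 → ℝ) →ₗ[ℝ] CliffordAlgebra Qe2 := CliffordAlgebra.ι Qe2

/-- The unit vector `a(θ) = (−sin θ, cos θ)` dually representing a point of `El¹`. -/
noncomputable def pt (θ : ℝ) : Fin 2 → ℝ := ![-Real.sin θ, Real.cos θ]

/-- The image of the first standard basis vector in `Cl(2)`. -/
noncomputable def e0 : CliffordAlgebra Qe2 := ι2 ![1, 0]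

/-- The image of the second standard basis vector in `Cl(2)`. -/
noncomputable def e1 : CliffordAlgebra Qe2 := ι2 ![0, 1]

/-! The geometric product of two points is a rotor,
`a(α) a(β) = cos (α - β) - sin (α - β) e₀e₁`, so their commutator is `-2 sin (α - β) e₀e₁`;
since the pseudoscalar `e₀e₁` anticommutes with every vector, multiplying on the right by `a(β)`
turns it into `sin (α - β) a(β) e₀e₁`. -/

open Real

lemma Qe2_apply (v : Fin 2 → ℝ) : Qe2 v = v 0 ^ 2 + v 1 ^ 2 := by
  simp [Qe2, QuadraticMap.weightedSumSquares_apply, Fin.sum_univ_two, sq]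

lemma e0_mul_e0 : e0 * e0 = 1 := by
  rw [e0, ι2, CliffordAlgebra.ι_sq_scalar, Qe2_apply]
  norm_num

lemma e1_mul_e1 : e1 * e1 = 1 := by
  rw [e1, ι2, CliffordAlgebra.ι_sq_scalar, Qe2_apply]
  norm_num

lemma e1_mul_e0 : e1 * e0 = -(e0 * e1) :=
  CliffordAlgebra.ι_mul_ι_comm_of_isOrtho <| QuadraticMap.isOrtho_def.mpr <| by
    simp [Qe2_apply]

lemma ι2_eq (v : Fin 2 → ℝ) : ι2 v = v 0 • e0 + v 1 • e1 := by
  rw [e0, e1, ← map_smul, ← map_smul, ← map_add]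
  congr 1
  ext i
  fin_cases i <;> simp

lemma e0_mul_e1_mul_ι2 (v : Fin 2 → ℝ) : e0 * e1 * ι2 v = -(ι2 v * (e0 * e1)) := by
  rw [ι2_eq]
  simp only [mul_add, add_mul, mul_smul_comm, smul_mul_assoc, neg_add, ← smul_neg]
  congr 2
  · rw [mul_assoc, e1_mul_e0, mul_neg]
  · rw [mul_assoc, e1_mul_e1, ← mul_assoc e1, e1_mul_e0, neg_mul, neg_neg, mul_assoc, e1_mul_e1]

lemma ι2_pt_mul_ι2_pt (α β : ℝ) :
    ι2 (pt α) * ι2 (pt β) = algebraMap ℝ _ (cos (α - β)) - sin (α - β) • (e0 * e1) := by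
  simp only [ι2_eq, pt, Matrix.cons_val_zero, Matrix.cons_val_one, cos_sub, sin_sub, add_mul,
    mul_add, smul_mul_smul_comm, e0_mul_e0, e1_mul_e1, e1_mul_e0, Algebra.algebraMap_eq_smul_one]
  module

lemma ι2_pt_commutator (α β : ℝ) :
    ι2 (pt α) * ι2 (pt β) - ι2 (pt β) * ι2 (pt α) = (-2 * sin (α - β)) • (e0 * e1) := by
  rw [ι2_pt_mul_ι2_pt, ι2_pt_mul_ι2_pt, ← neg_sub α β, cos_neg, sin_neg]
  module

/-- The rejection of the point `ι(a(α))` by the point `ι(a(β))`, namely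
`(1/2) • (ι(a(α)) ι(a(β)) − ι(a(β)) ι(a(α))) ι(a(β))`, equals
`sin(α − β) • (ι(a(β)) e₀ e₁)`, the polar point of `a(β)` weighted by `sin(α − β)`. -/
theorem elliptic_line_rejection (α β : ℝ) :
    ((1 : ℝ) / 2) • ((ι2 (pt α) * ι2 (pt β) - ι2 (pt β) * ι2 (pt α)) * ι2 (pt β)) =
      Real.sin (α - β) • (ι2 (pt β) * e0 * e1) := by
  rw [ι2_pt_commutator, smul_mul_assoc, e0_mul_e1_mul_ι2, smul_smul, smul_neg, ← neg_smul,
    mul_assoc]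
  congr 1
  ring
end

section
/- Let u be a quaternion with re u = 0 and ‖u‖ = 1, and let θ, φ ∈ ℝ. If p is a quaternion with re p = 0 and re (p * star u) = 0, then the quaternion p' = exp(θ • u) * p * exp(φ • u) also satisfies re p' = 0 and re (p' * star u) = 0; that is, the polar axis ΛI of a double rotation of elliptic 3-space (the great circle cut out by the orthogonal complement of the plane spanned by 1 and u) is invariant under the double rotation. -/
/-!
For a pure quaternion `u`, the orthogonal complement of `span {1, u}` is a real subspace that is
stable under left and right multiplication by `u`, hence under multiplication on either side by
every `a + b u`. Since `u` is pure, `exp (θ • u) = cos ‖θ • u‖ + (sin ‖θ • u‖ / ‖θ • u‖) θ • u` has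
this form, so the double rotation maps the complement to itself.
-/

namespace Quaternion

noncomputable def polarAxis (u : ℍ[ℝ]) : Submodule ℝ ℍ[ℝ] := (Submodule.span ℝ {1, u})ᗮ

theorem mem_polarAxis_iff {u p : ℍ[ℝ]} : p ∈ polarAxis u ↔ p.re = 0 ∧ (p * star u).re = 0 := by
  have hre : p.re = inner ℝ p 1 := by rw [inner_def, star_one, mul_one]
  rw [polarAxis, Submodule.mem_orthogonal', hre, ← inner_def]
  constructor
  · intro h
    exact ⟨h 1 (Submodule.subset_span (by simp)), h u (Submodule.subset_span (by simp))⟩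
  · rintro ⟨h1, hu⟩ x hx
    obtain ⟨r, s, rfl⟩ := Submodule.mem_span_pair.1 hx
    rw [inner_add_right, inner_smul_right, inner_smul_right, h1, hu, mul_zero, mul_zero, add_zero]

theorem re_mul_comm (a b : ℍ[ℝ]) : (a * b).re = (b * a).re := by
  simp only [re_mul]
  ring

theorem re_mul_coe (p : ℍ[ℝ]) (r : ℝ) : (p * (r : ℍ[ℝ])).re = r * p.re := by
  rw [mul_coe_eq_smul, re_smul, smul_eq_mul]

variable {u p : ℍ[ℝ]}

theorem self_mul_mem_polarAxis (hu : u.re = 0) (hp : p ∈ polarAxis u) : u * p ∈ polarAxis u := by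
  obtain ⟨hp1, hp2⟩ := mem_polarAxis_iff.1 hp
  refine mem_polarAxis_iff.2 ⟨?_, ?_⟩
  · rw [re_mul_comm, ← neg_neg u, ← star_eq_neg.2 hu, mul_neg, re_neg, hp2, neg_zero]
  · rw [mul_assoc, re_mul_comm, mul_assoc, star_mul_self, re_mul_coe, hp1, mul_zero]

theorem mul_self_mem_polarAxis (hu : u.re = 0) (hp : p ∈ polarAxis u) : p * u ∈ polarAxis u := by
  obtain ⟨hp1, hp2⟩ := mem_polarAxis_iff.1 hp
  refine mem_polarAxis_iff.2 ⟨?_, ?_⟩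
  · rw [← neg_neg u, ← star_eq_neg.2 hu, mul_neg, re_neg, hp2, neg_zero]
  · rw [mul_assoc, self_mul_star, re_mul_coe, hp1, mul_zero]

theorem coe_add_smul_mul_mem_polarAxis (hu : u.re = 0) (a b : ℝ) (hp : p ∈ polarAxis u) :
    ((a : ℍ[ℝ]) + b • u) * p ∈ polarAxis u := by
  rw [add_mul, coe_mul_eq_smul, smul_mul_assoc]
  exact add_mem (Submodule.smul_mem _ a hp) (Submodule.smul_mem _ b (self_mul_mem_polarAxis hu hp))

theorem mul_coe_add_smul_mem_polarAxis (hu : u.re = 0) (a b : ℝ) (hp : p ∈ polarAxis u) :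
    p * ((a : ℍ[ℝ]) + b • u) ∈ polarAxis u := by
  rw [mul_add, mul_coe_eq_smul, mul_smul_comm]
  exact add_mem (Submodule.smul_mem _ a hp) (Submodule.smul_mem _ b (mul_self_mem_polarAxis hu hp))

end Quaternion

open Quaternion in
theorem double_rotation_polar_axis_invariant_general (u : Quaternion ℝ) (hre : u.re = 0)
    (θ φ : ℝ) (p : Quaternion ℝ)
    (hp1 : p.re = 0) (hp2 : (p * star u).re = 0) :
    (NormedSpace.exp (θ • u) * p * NormedSpace.exp (φ • u)).re = 0 ∧
      (NormedSpace.exp (θ • u) * p * NormedSpace.exp (φ • u) * star u).re = 0 := by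
  have hpure (t : ℝ) : (t • u).re = 0 := by rw [re_smul, hre, smul_zero]
  rw [← mem_polarAxis_iff, exp_of_re_eq_zero _ (hpure θ), exp_of_re_eq_zero _ (hpure φ),
    smul_smul, smul_smul]
  exact mul_coe_add_smul_mem_polarAxis hre _ _
    (coe_add_smul_mul_mem_polarAxis hre _ _ (mem_polarAxis_iff.2 ⟨hp1, hp2⟩))

/-- The polar axis `ΛI` of a double rotation `p ↦ exp(θ • u) * p * exp(φ • u)` of
elliptic 3-space — the great circle cut out by the orthogonal complement of the plane
spanned by `1` and `u` (characterized by `re p = 0` and `re (p * star u) = 0`) — is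
invariant under the double rotation. -/
theorem double_rotation_polar_axis_invariant (u : Quaternion ℝ) (hre : u.re = 0)
    (hnorm : ‖u‖ = 1) (θ φ : ℝ) (p : Quaternion ℝ)
    (hp1 : p.re = 0) (hp2 : (p * star u).re = 0) :
    (NormedSpace.exp (θ • u) * p * NormedSpace.exp (φ • u)).re = 0 ∧
      (NormedSpace.exp (θ • u) * p * NormedSpace.exp (φ • u) * star u).re = 0 :=
  double_rotation_polar_axis_invariant_general u hre θ φ p hp1 hp2
end

section
/- For all vectors a, b ∈ ℝ³ (with the Euclidean inner product ⟪·,·⟫) there exist vectors a₁, b₁ ∈ ℝ³ and a real number t with |t| ≤ 1 such that ⟪a₁, b₁⟫ = 0, a = a₁ + t • b₁ and b = b₁ + t • a₁; that is, every bivector of elliptic 3-space decomposes as the sum of two complementary lines (its axes), the smaller axis being a multiple t of the polar of the larger axis. -/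
open scoped RealInnerProductSpace

/-!
With `s = ⟪a, b⟫` and `q = ‖a‖² + ‖b‖²` one has `⟪a - t b, b - t a⟫ = s (1 + t²) - q t`, and
since `2 |s| ≤ q` the quadratic `s (1 + t²) = q t` has a root `t` with `|t| ≤ 1`. For `t² ≠ 1`
the axes are `a₁ = (a - t b) / (1 - t²)` and `b₁ = (b - t a) / (1 - t²)`. For `t² = 1` the vector
`b - t a` is `-t (a - t b)`, so orthogonality forces `a = t b`, and `a₁ = 0`, `b₁ = b` works.
-/

theorem exists_abs_le_one_mul_one_add_sq_eq {s q : ℝ} (h : 2 * |s| ≤ q) :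
    ∃ t : ℝ, |t| ≤ 1 ∧ s * (1 + t ^ 2) = q * t := by
  have hdisc : 0 ≤ q ^ 2 - 4 * s ^ 2 := by nlinarith [abs_nonneg s, sq_abs s]
  set r := √(q ^ 2 - 4 * s ^ 2)
  have hr : r ^ 2 = q ^ 2 - 4 * s ^ 2 := Real.sq_sqrt hdisc
  have hqr : 2 * |s| ≤ q + r := le_add_of_le_of_nonneg h (Real.sqrt_nonneg _)
  rcases (le_trans (by positivity) hqr).eq_or_lt with hqr0 | hqr0
  · have hs : s = 0 := abs_eq_zero.mp (by linarith [abs_nonneg s])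
    exact ⟨0, by simp, by simp [hs]⟩
  -- the root `(q - r) / (2 s)` of the quadratic, written so that it makes sense at `s = 0`
  refine ⟨2 * s / (q + r), ?_, ?_⟩
  · rw [abs_div, abs_of_pos hqr0, abs_mul, abs_two]
    exact div_le_one_of_le₀ hqr hqr0.le
  · field_simp
    linear_combination s * hr

section InnerProductSpace

variable {E : Type*} [NormedAddCommGroup E] [InnerProductSpace ℝ E]

theorem two_mul_abs_real_inner_le (a b : E) : 2 * |⟪a, b⟫| ≤ ‖a‖ ^ 2 + ‖b‖ ^ 2 := by
  nlinarith [abs_real_inner_le_norm a b, sq_nonneg (‖a‖ - ‖b‖)]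

theorem real_inner_sub_smul_sub_smul (a b : E) (t : ℝ) :
    ⟪a - t • b, b - t • a⟫ = ⟪a, b⟫ * (1 + t ^ 2) - (‖a‖ ^ 2 + ‖b‖ ^ 2) * t := by
  simp only [inner_sub_left, inner_sub_right, real_inner_smul_left, real_inner_smul_right,
    real_inner_self_eq_norm_sq, real_inner_comm a b]
  ring

theorem eq_smul_of_real_inner_sub_smul_sub_smul_eq_zero {a b : E} {t : ℝ} (ht : t ^ 2 = 1)
    (h : ⟪a - t • b, b - t • a⟫ = 0) : a = t • b := by
  have hba : b - t • a = -t • (a - t • b) := by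
    rw [smul_sub, smul_smul, neg_mul, ← sq, ht, neg_smul, neg_smul, one_smul]; abel
  rw [hba, real_inner_smul_right, real_inner_self_eq_norm_sq, mul_eq_zero, neg_eq_zero] at h
  rcases h with rfl | h
  · norm_num at ht
  · exact sub_eq_zero.mp (by simpa using h)

noncomputable def axis (t : ℝ) (a b : E) : E := (1 - t ^ 2)⁻¹ • (a - t • b)

theorem axis_add_smul_axis {t : ℝ} (ht : t ^ 2 ≠ 1) (a b : E) :
    axis t a b + t • axis t b a = a := by
  have : 1 - t ^ 2 ≠ 0 := sub_ne_zero.mpr (Ne.symm ht)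
  unfold axis
  match_scalars <;> field_simp <;> ring

theorem real_inner_axis_axis (t : ℝ) (a b : E) :
    ⟪axis t a b, axis t b a⟫ = (1 - t ^ 2)⁻¹ ^ 2 * ⟪a - t • b, b - t • a⟫ := by
  rw [axis, axis, real_inner_smul_left, real_inner_smul_right]
  ring

end InnerProductSpace

/-- Every bivector of elliptic 3-space, recorded as a pair of vectors
`a, b ∈ ℝ³`, decomposes as the sum of two complementary lines (its axes): there are
`a₁, b₁` with `⟪a₁, b₁⟫ = 0` and `t` with `|t| ≤ 1` such that `a = a₁ + t b₁` and
`b = b₁ + t a₁`; the smaller axis is the multiple `t` of the polar of the larger axis. -/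
theorem bivector_axes_decomposition (a b : EuclideanSpace ℝ (Fin 3)) :
    ∃ (a₁ b₁ : EuclideanSpace ℝ (Fin 3)) (t : ℝ), |t| ≤ 1 ∧ ⟪a₁, b₁⟫ = 0 ∧
      a = a₁ + t • b₁ ∧ b = b₁ + t • a₁ := by
  obtain ⟨t, ht, hroot⟩ := exists_abs_le_one_mul_one_add_sq_eq (two_mul_abs_real_inner_le a b)
  have horth : ⟪a - t • b, b - t • a⟫ = 0 := by
    rw [real_inner_sub_smul_sub_smul, hroot, sub_self]
  by_cases ht1 : t ^ 2 = 1
  · refine ⟨0, b, t, ht, inner_zero_left _, ?_, by simp⟩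
    rw [eq_smul_of_real_inner_sub_smul_sub_smul_eq_zero ht1 horth, zero_add]
  · refine ⟨axis t a b, axis t b a, t, ht, ?_, (axis_add_smul_axis ht1 a b).symm,
      (axis_add_smul_axis ht1 b a).symm⟩
    rw [real_inner_axis_axis, horth, mul_zero]
end

section
/- For all real numbers r₁, r₂ with 0 ≤ r₁ ≤ r₂ ≤ π/2, setting u = cos r₁ * cos r₂ and v = sin r₁ * sin r₂, one has 2 * (sin r₁)² = 1 + v² − u² − Real.sqrt ((1 + v² − u²)² − 4 * v²); that is, the distance r = r₁ between two normalized lines of elliptic 3-space is recovered from the scalars u = Λ·Φ (up to sign) and v = Λ∨Φ of their geometric product by the formula 2 sin² r = 1 + v² − u² − √((1 + v² − u²)² − 4v²). -/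
open Real

/-!
Writing `s = sin² r₁` and `t = sin² r₂`, one has `u² = (1 - s)(1 - t)` and `v² = s t`, so
`1 + v² - u² = s + t` and the radicand is `(s + t)² - 4 s t = (t - s)²`: the right-hand side is
the smaller root `2 s` of `X² - 2(s + t) X + 4 s t`, because `s ≤ t` on `[0, π/2]`.
-/

lemma add_sub_sqrt_sq_sub_four_mul_eq_two_mul {s t : ℝ} (hst : s ≤ t) :
    s + t - √((s + t) ^ 2 - 4 * (s * t)) = 2 * s := by
  have hdiscr : (s + t) ^ 2 - 4 * (s * t) = (t - s) ^ 2 := by ring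
  rw [hdiscr, sqrt_sq (sub_nonneg.mpr hst)]
  ring

lemma one_add_sq_sin_mul_sin_sub_sq_cos_mul_cos (x y : ℝ) :
    1 + (sin x * sin y) ^ 2 - (cos x * cos y) ^ 2 = sin x ^ 2 + sin y ^ 2 := by
  rw [mul_pow, mul_pow, cos_sq', cos_sq']
  ring

lemma sin_sq_le_sin_sq_of_le {x y : ℝ} (hx : 0 ≤ x) (hxy : x ≤ y) (hy : y ≤ π / 2) :
    sin x ^ 2 ≤ sin y ^ 2 := by
  have hsin_nonneg : 0 ≤ sin x := sin_nonneg_of_nonneg_of_le_pi hx (by linarith [pi_pos])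
  have hsin_le : sin x ≤ sin y :=
    sin_le_sin_of_le_of_le_pi_div_two (by linarith [pi_pos]) hy hxy
  exact pow_le_pow_left₀ hsin_nonneg hsin_le 2

/-- The distance `r = r₁` between two normalized lines of elliptic 3-space is recovered
from the scalars `u = cos r₁ cos r₂` and `v = sin r₁ sin r₂` of their geometric product
by the formula `2 sin² r = 1 + v² − u² − √((1 + v² − u²)² − 4v²)`. -/
theorem elliptic_line_distance_formula (r₁ r₂ : ℝ) (h0 : 0 ≤ r₁) (h12 : r₁ ≤ r₂)
    (h2 : r₂ ≤ π / 2) :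
    2 * Real.sin r₁ ^ 2 =
      1 + (Real.sin r₁ * Real.sin r₂) ^ 2 - (Real.cos r₁ * Real.cos r₂) ^ 2 -
        Real.sqrt ((1 + (Real.sin r₁ * Real.sin r₂) ^ 2 -
            (Real.cos r₁ * Real.cos r₂) ^ 2) ^ 2 -
          4 * (Real.sin r₁ * Real.sin r₂) ^ 2) := by
  rw [one_add_sq_sin_mul_sin_sub_sq_cos_mul_cos, mul_pow,
    add_sub_sqrt_sq_sub_four_mul_eq_two_mul (sin_sq_le_sin_sq_of_le h0 h12 h2)]
end
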